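/- arXiv:1005.2369 — 3 statements merged into one kernel-verified Lean document; each statement's English description precedes it below -/
import Mathlib

section
/- If ξ : [0,∞) → E is left-continuous with right limits and ℓ : [0,∞) → [0,∞) is non-decreasing and left-continuous, then ξ ∘ ℓ is left-continuous with right limits. -/
/-!
Since `ℓ` is monotone and left-continuous, `ℓ s → ℓ t` from below-or-equal as `s ↑ t`, and an lcrl
path is continuous at `a` within `Iic a`. As `s ↓ t`, `ℓ s` either is eventually equal to its right
limit `L` (so `ξ ∘ ℓ` is eventually constant) or tends to `L` strictly from above, where `ξ` has a
limit.
-/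

open Filter Topology Set Function MeasureTheory NNReal

noncomputable section

/-- Right-continuous with left limits (rcll / càdlàg) on `[0,∞)`. -/
def Cadlag {E : Type*} [TopologicalSpace E] (f : ℝ≥0 → E) : Prop :=
  (∀ t : ℝ≥0, Tendsto f (𝓝[>] t) (𝓝 (f t))) ∧
    ∀ t : ℝ≥0, 0 < t → ∃ l, Tendsto f (𝓝[<] t) (𝓝 l)

/-- Left-continuous with right limits (lcrl) on `[0,∞)`. -/
def Lcrl {E : Type*} [TopologicalSpace E] (f : ℝ≥0 → E) : Prop :=
  (∀ t : ℝ≥0, 0 < t → Tendsto f (𝓝[<] t) (𝓝 (f t))) ∧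
    ∀ t : ℝ≥0, ∃ l, Tendsto f (𝓝[>] t) (𝓝 l)

/-- Generalized (right-continuous) inverse `σ⁻¹(t) = inf {s ≥ 0 : σ(s) > t}`. -/
def ginv (σ : ℝ≥0 → ℝ≥0) (t : ℝ≥0) : ℝ≥0 := sInf {s : ℝ≥0 | t < σ s}

/-- Left-continuous version `f⁻` of a path: `f⁻(t) = f(t-)` for `t > 0`, `f⁻(0) = f(0)`. -/
def lver {E : Type*} [TopologicalSpace E] (f : ℝ≥0 → E) : ℝ≥0 → E :=
  fun t => if t = 0 then f 0 else leftLim f t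

/-- Right-continuous version `f⁺` of a path: `f⁺(t) = f(t+)`. -/
def rver {E : Type*} [TopologicalSpace E] (f : ℝ≥0 → E) : ℝ≥0 → E :=
  fun t => rightLim f t

theorem Lcrl.continuousWithinAt_Iic {E : Type*} [TopologicalSpace E] {ξ : ℝ≥0 → E}
    (hξ : Lcrl ξ) (a : ℝ≥0) : ContinuousWithinAt ξ (Iic a) a := by
  rw [← continuousWithinAt_Iio_iff_Iic]
  rcases eq_zero_or_pos a with rfl | ha
  · simp [ContinuousWithinAt]
  · exact hξ.1 a ha

theorem Monotone.eventually_eq_or_tendsto_nhdsGT {α β : Type*} [LinearOrder α]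
    [TopologicalSpace α] [OrderTopology α] [ConditionallyCompleteLinearOrder β]
    [TopologicalSpace β] [OrderTopology β] {f : α → β} (hf : Monotone f) (x : α) :
    (∀ᶠ u in 𝓝[>] x, f u = sInf (f '' Ioi x)) ∨
      Tendsto f (𝓝[>] x) (𝓝[>] sInf (f '' Ioi x)) := by
  set L := sInf (f '' Ioi x)
  have hL : ∀ u, x < u → L ≤ f u := fun u hu =>
    csInf_le ⟨f x, forall_mem_image.2 fun v hv => hf (le_of_lt hv)⟩ (mem_image_of_mem f hu)
  by_cases hattained : ∃ s, x < s ∧ f s = L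
  · obtain ⟨s, hxs, hs⟩ := hattained
    left
    filter_upwards [Ioo_mem_nhdsGT hxs] with u hu
    exact le_antisymm (hs ▸ hf hu.2.le) (hL u hu.1)
  · simp only [not_exists, not_and] at hattained
    right
    exact tendsto_nhdsWithin_of_tendsto_nhds_of_eventually_within _ (hf.tendsto_nhdsGT x)
      (eventually_nhdsWithin_of_forall fun u hu => (hL u hu).lt_of_ne' (hattained u hu))

/-- if `ξ` is lcrl into a metric space and `ℓ : [0,∞) → [0,∞)` is
non-decreasing and left-continuous, then `ξ ∘ ℓ` is lcrl. -/
theorem stmt3 {E : Type*} [MetricSpace E] (ξ : ℝ≥0 → E) (hξ : Lcrl ξ)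
    (ℓ : ℝ≥0 → ℝ≥0) (hmono : Monotone ℓ)
    (hlc : ∀ t : ℝ≥0, 0 < t → Tendsto ℓ (𝓝[<] t) (𝓝 (ℓ t))) :
    Lcrl (ξ ∘ ℓ) := by
  refine ⟨fun t ht => ?_, fun t => ?_⟩
  · have hℓ : Tendsto ℓ (𝓝[<] t) (𝓝[≤] ℓ t) :=
      tendsto_nhdsWithin_of_tendsto_nhds_of_eventually_within _ (hlc t ht)
        (eventually_nhdsWithin_of_forall fun s hs => hmono (le_of_lt hs))
    exact (hξ.continuousWithinAt_Iic (ℓ t)).tendsto.comp hℓ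
  · rcases hmono.eventually_eq_or_tendsto_nhdsGT t with hconst | hgt
    · exact ⟨_, tendsto_const_nhds.congr' (hconst.mono fun u hu => congrArg ξ hu.symm)⟩
    · obtain ⟨l, hl⟩ := hξ.2 (sInf (ℓ '' Ioi t))
      exact ⟨l, hl.comp hgt⟩
end
end

section
/- Let β : [0,∞) → ℝ^d and σ : [0,∞) → [0,∞) be rcll with σ strictly increasing and unbounded, and let ℓ = σ⁻¹. If β and σ have no common discontinuity points, then the left-limit function of the rcll regularization of β⁻ ∘ ℓ⁻ equals the left-limit function of β ∘ ℓ; consequently the lagging limit process (β⁻ ∘ ℓ⁻)⁺ equals the leading limit process β ∘ ℓ. -/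
open Filter Topology Set Function MeasureTheory NNReal

noncomputable section

/-!
Write `ℓ = ginv σ`. Since `ℓ ∘ σ = id`, the monotone map `ℓ` is onto and hence continuous, so
`ℓ⁻ = ℓ`, and it remains to compute the right limit of `β⁻ ∘ ℓ` at `t`, with `u = ℓ t`.
Always `t ≤ σ u`. If `σ u = t`, then `ℓ` is strictly increasing to the right of `t`, and
`β⁻(v) → β u` as `v ↓ u` by right continuity of `β`. If `t < σ u`, then `ℓ ≡ u` on
`[t, σ u)`, so the right limit is `β⁻ u`; but then `σ` jumps at `u`, so `β` is continuous
at `u` and `β⁻ u = β u`.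
-/

section LeftLim

variable {α β : Type*} [LinearOrder α] [TopologicalSpace α] [OrderTopology α] [TopologicalSpace β]

theorem tendsto_leftLim_nhdsGT [RegularSpace β] {f : α → β} {a : α} {y : β}
    (h : Tendsto f (𝓝[>] a) (𝓝 y)) : Tendsto (leftLim f) (𝓝[>] a) (𝓝 y) := by
  rw [(closed_nhds_basis y).tendsto_right_iff] at h ⊢
  rintro s ⟨hs, hs_closed⟩
  rcases (Ioi a).eq_empty_or_nonempty with hempty | ⟨b, hb⟩
  · simp [hempty]
  obtain ⟨u, hau, hu⟩ : ∃ u ∈ Ioi a, Ioo a u ⊆ {x | f x ∈ s} :=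
    (mem_nhdsGT_iff_exists_Ioo_subset' hb).1 (h s ⟨hs, hs_closed⟩)
  filter_upwards [Ioo_mem_nhdsGT hau] with c hc
  rcases eq_or_neBot (𝓝[<] c) with hbot | hne
  · simpa [leftLim_eq_of_eq_bot _ hbot] using hu hc
  by_cases! hlim : ¬ ∃ z, Tendsto f (𝓝[<] c) (𝓝 z)
  · simpa [leftLim_eq_of_not_tendsto _ hlim] using hu hc
  -- `f` takes values in the closed set `s` on `(a, c)`, hence so does its left limit at `c`
  apply hs_closed.mem_of_tendsto (tendsto_leftLim_of_tendsto hlim)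
  filter_upwards [Ioo_mem_nhdsLT hc.1] with d hd using hu ⟨hd.1, hd.2.trans hc.2⟩

end LeftLim

theorem lver_eq_leftLim {E : Type*} [TopologicalSpace E] (f : ℝ≥0 → E) : lver f = leftLim f := by
  funext t
  rcases eq_or_ne t 0 with rfl | ht
  · simp [lver, leftLim_eq_of_isBot (f := f) (a := 0) fun _ => zero_le]
  · simp [lver, ht]

section GeneralizedInverse

variable {σ : ℝ≥0 → ℝ≥0} {t x : ℝ≥0}

theorem ginv_apply_self (hsm : StrictMono σ) (s : ℝ≥0) : ginv σ (σ s) = s := by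
  simp only [ginv, hsm.lt_iff_lt]
  exact csInf_Ioi

theorem ginv_mono (hub : ∀ M, ∃ s, M < σ s) : Monotone (ginv σ) := fun _ b hab =>
  csInf_le_csInf (OrderBot.bddBelow _) (hub b) fun _ hs => hab.trans_lt hs

theorem continuous_ginv (hsm : StrictMono σ) (hub : ∀ M, ∃ s, M < σ s) : Continuous (ginv σ) :=
  (ginv_mono hub).continuous_of_surjective fun s => ⟨σ s, ginv_apply_self hsm s⟩

theorem ginv_le_of_lt_apply (h : t < σ x) : ginv σ t ≤ x :=
  csInf_le (OrderBot.bddBelow _) h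

theorem apply_le_of_lt_ginv (h : x < ginv σ t) : σ x ≤ t :=
  le_of_not_gt fun h' => (ginv_le_of_lt_apply h').not_gt h

theorem lt_apply_of_ginv_lt (hsm : StrictMono σ) (hub : ∀ M, ∃ s, M < σ s)
    (h : ginv σ t < x) : t < σ x := by
  obtain ⟨s, hts, hsx⟩ := exists_lt_of_csInf_lt (hub t) h
  exact hts.trans (hsm hsx)

theorem le_apply_ginv (hσ : ∀ s, ContinuousWithinAt σ (Ioi s) s) (hsm : StrictMono σ)
    (hub : ∀ M, ∃ s, M < σ s) (t : ℝ≥0) : t ≤ σ (ginv σ t) :=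
  ge_of_tendsto (hσ (ginv σ t)) <|
    eventually_nhdsWithin_of_forall fun _ hs => (lt_apply_of_ginv_lt hsm hub hs).le

theorem apply_ginv_le_of_continuousAt [(𝓝[<] ginv σ t).NeBot]
    (h : ContinuousAt σ (ginv σ t)) : σ (ginv σ t) ≤ t :=
  le_of_tendsto (h.tendsto.mono_left (nhdsWithin_le_nhds (s := Iio _))) <|
    eventually_nhdsWithin_of_forall fun _ hx => apply_le_of_lt_ginv hx

theorem tendsto_ginv_nhdsGT (hσ : ∀ s, ContinuousWithinAt σ (Ioi s) s) (hsm : StrictMono σ)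
    (hub : ∀ M, ∃ s, M < σ s) (ht : σ (ginv σ t) = t) :
    Tendsto (ginv σ) (𝓝[>] t) (𝓝[>] (ginv σ t)) := by
  refine tendsto_nhdsWithin_iff.2
    ⟨(continuous_ginv hsm hub).continuousWithinAt, eventually_nhdsWithin_of_forall fun s hs => ?_⟩
  rw [mem_Ioi]
  by_contra! hle
  have : s ≤ t := calc
    s ≤ σ (ginv σ s) := le_apply_ginv hσ hsm hub s
    _ ≤ σ (ginv σ t) := hsm.monotone hle
    _ = t := ht
  exact (not_le.2 hs) this

theorem ginv_eventuallyEq_nhdsGT (hub : ∀ M, ∃ s, M < σ s) (ht : t < σ (ginv σ t)) :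
    ginv σ =ᶠ[𝓝[>] t] fun _ => ginv σ t := by
  filter_upwards [Ioo_mem_nhdsGT ht] with s hs
  exact le_antisymm (ginv_le_of_lt_apply hs.2) (ginv_mono hub hs.1.le)

end GeneralizedInverse

theorem tendsto_leftLim_comp_ginv_nhdsGT {E : Type*} [TopologicalSpace E] [T3Space E]
    {β : ℝ≥0 → E} {σ : ℝ≥0 → ℝ≥0} (hβ : ∀ s, ContinuousWithinAt β (Ioi s) s)
    (hσ : ∀ s, ContinuousWithinAt σ (Ioi s) s) (hsm : StrictMono σ)
    (hub : ∀ M, ∃ s, M < σ s) (hdisj : ∀ u, ContinuousAt β u ∨ ContinuousAt σ u) (t : ℝ≥0) :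
    Tendsto (leftLim β ∘ ginv σ) (𝓝[>] t) (𝓝 (β (ginv σ t))) := by
  rcases (le_apply_ginv hσ hsm hub t).eq_or_lt with heq | hlt
  · exact (tendsto_leftLim_nhdsGT (hβ _)).comp (tendsto_ginv_nhdsGT hσ hsm hub heq.symm)
  have hβu : leftLim β (ginv σ t) = β (ginv σ t) := by
    rcases hdisj (ginv σ t) with hβc | hσc
    · exact hβc.continuousWithinAt.leftLim_eq
    rcases eq_or_neBot (𝓝[<] ginv σ t) with hbot | hne
    · exact leftLim_eq_of_eq_bot β hbot
    · exact absurd (apply_ginv_le_of_continuousAt hσc) hlt.not_ge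
  rw [← hβu]
  exact tendsto_const_nhds.congr' ((ginv_eventuallyEq_nhdsGT hub hlt).fun_comp _).symm

/-- if `β : [0,∞) → ℝ^d` and `σ` are rcll, `σ` strictly increasing and
unbounded with (continuous) inverse `ℓ = σ⁻¹`, and `β`, `σ` share no discontinuity
point, then the left-limit function of `(β⁻ ∘ ℓ⁻)⁺` equals that of `β ∘ ℓ`, and
consequently the lagging process `(β⁻ ∘ ℓ⁻)⁺` equals the leading process `β ∘ ℓ`. -/
theorem stmt6 {d : ℕ} (β : ℝ≥0 → (Fin d → ℝ)) (σ : ℝ≥0 → ℝ≥0)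
    (hβ : Cadlag β) (hσ : Cadlag σ) (hsm : StrictMono σ)
    (hub : ∀ M : ℝ≥0, ∃ s, M < σ s)
    (hdisj : ∀ u : ℝ≥0, ContinuousAt β u ∨ ContinuousAt σ u) :
    (∀ t : ℝ≥0, 0 < t →
        leftLim (rver (lver β ∘ lver (ginv σ))) t = leftLim (β ∘ ginv σ) t) ∧
      rver (lver β ∘ lver (ginv σ)) = β ∘ ginv σ := by
  have hℓ : lver (ginv σ) = ginv σ := by
    rw [lver_eq_leftLim]
    exact funext fun t => (continuous_ginv hsm hub).continuousWithinAt.leftLim_eq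
  have key : rver (lver β ∘ lver (ginv σ)) = β ∘ ginv σ := by
    rw [hℓ, lver_eq_leftLim]
    exact funext fun t => rightLim_eq_of_tendsto
      (tendsto_leftLim_comp_ginv_nhdsGT hβ.1 hσ.1 hsm hub hdisj t)
  exact ⟨fun t _ => by rw [key], key⟩
end
end

section
/- Let (β, σ) be an rcll path in ℝ^d × [0,∞) with σ non-decreasing and unbounded, ℓ = σ⁻¹. Define the lagging composition X = (β⁻ ∘ ℓ⁻)⁺ and leading composition Y = β ∘ ℓ. Then for each t ≥ 0 with σ(ℓ(t)) = t (i.e., t in the range of σ and ℓ right-increasing at t), X(t) = Y(t). -/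
/-!
Write `ℓ = ginv σ`. Since `σ` is right-continuous at `ℓ t` with `σ (ℓ t) = t`, it stays below any
`t' > t` just to the right of `ℓ t`, so `ℓ t < ℓ t'`: the inverse increases strictly to the right
of `t`. Hence, as `u ↓ t`, the left limits `ℓ (u-)` lie strictly above `ℓ t` and converge to it
(`ℓ` is right-continuous). Left limits of `β` taken strictly to the right of `ℓ t` converge to
`β (ℓ t)` by right-continuity of `β`, so `β⁻ (ℓ⁻ u) → β (ℓ t)` as `u ↓ t`, i.e. `X t = Y t`.
-/

open Filter Topology Set Function MeasureTheory NNReal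

noncomputable section

theorem tendsto_leftLim_nhdsGT_of_tendsto {α β : Type*} [LinearOrder α]
    [TopologicalSpace α] [OrderTopology α] [TopologicalSpace β] [RegularSpace β]
    {f : α → β} {a : α} {b : β} (h : Tendsto f (𝓝[>] a) (𝓝 b)) :
    Tendsto (leftLim f) (𝓝[>] a) (𝓝 b) := by
  refine (closed_nhds_basis b).tendsto_right_iff.2 fun s ⟨hs, hs_closed⟩ => ?_
  rcases eq_or_neBot (𝓝[>] a) with hbot | _
  · simp [hbot]
  obtain ⟨c, hc⟩ : (Ioi a).Nonempty := nonempty_of_mem (self_mem_nhdsWithin (a := a))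
  obtain ⟨u, hau, hu⟩ := (mem_nhdsGT_iff_exists_Ioo_subset' hc).1 (h hs)
  filter_upwards [Ioo_mem_nhdsGT hau] with x hx
  -- Whether or not the left limit exists, `leftLim f x` is a cluster point of `f` along `𝓝[≤] x`.
  refine hs_closed.mem_of_mapClusterPt (mapClusterPt_leftLim f x) ?_
  filter_upwards [Ioc_mem_nhdsLE hx.1] with y hy using hu ⟨hy.1, hy.2.trans_lt hx.2⟩

section GeneralizedInverse

variable {σ : ℝ≥0 → ℝ≥0}

theorem ginv_le_of_lt {s t : ℝ≥0} (h : t < σ s) : ginv σ t ≤ s :=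
  csInf_le (OrderBot.bddBelow _) h

variable (hub : ∀ M : ℝ≥0, ∃ s, M < σ s)
include hub

theorem monotone_ginv : Monotone (ginv σ) := fun _ b hab =>
  le_csInf (hub b) fun _ hs => ginv_le_of_lt (hab.trans_lt hs)

theorem continuousWithinAt_ginv_Ioi (t : ℝ≥0) : ContinuousWithinAt (ginv σ) (Ioi t) t := by
  refine tendsto_order.2 ⟨fun a ha => ?_, fun b hb => ?_⟩
  · filter_upwards [self_mem_nhdsWithin] with u hu
    exact ha.trans_le (monotone_ginv hub (le_of_lt hu))
  · obtain ⟨s, hts, hsb⟩ := (csInf_lt_iff (OrderBot.bddBelow _) (hub t)).1 hb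
    filter_upwards [Ioo_mem_nhdsGT hts] with u hu
    exact (ginv_le_of_lt hu.2).trans_lt hsb

theorem ginv_lt_ginv_of_lt {t t' : ℝ≥0} (hσ : ContinuousWithinAt σ (Ioi (ginv σ t)) (ginv σ t))
    (ht : σ (ginv σ t) = t) (htt' : t < t') : ginv σ t < ginv σ t' := by
  rw [ContinuousWithinAt, ht] at hσ
  obtain ⟨c, hc, hbelow⟩ :=
    mem_nhdsGT_iff_exists_Ioo_subset.1 (hσ.eventually_lt_const htt')
  refine hc.trans_le (le_csInf (hub t') fun s (hs : t' < σ s) => ?_)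
  have hgt : ginv σ t < s := by
    refine (ginv_le_of_lt (htt'.trans hs)).lt_of_ne ?_
    rintro rfl
    exact (ht ▸ hs : t' < t).not_gt htt'
  by_contra! hsc
  exact (hbelow ⟨hgt, hsc⟩).not_gt hs

theorem tendsto_leftLim_ginv_nhdsGT {t : ℝ≥0}
    (hσ : ContinuousWithinAt σ (Ioi (ginv σ t)) (ginv σ t)) (ht : σ (ginv σ t) = t) :
    Tendsto (leftLim (ginv σ)) (𝓝[>] t) (𝓝[>] (ginv σ t)) := by
  have hmono := monotone_ginv hub
  have hgt : ∀ᶠ u in 𝓝[>] t, ginv σ t < leftLim (ginv σ) u := by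
    filter_upwards [self_mem_nhdsWithin] with u (hu : t < u)
    obtain ⟨m, htm, hmu⟩ := exists_between hu
    exact (ginv_lt_ginv_of_lt hub hσ ht htm).trans_le (hmono.le_leftLim hmu)
  refine tendsto_nhdsWithin_iff.2 ⟨?_, hgt⟩
  exact tendsto_of_tendsto_of_tendsto_of_le_of_le' tendsto_const_nhds
    (continuousWithinAt_ginv_Ioi hub t) (hgt.mono fun _ => le_of_lt)
    (Eventually.of_forall fun _ => hmono.leftLim_le le_rfl)

end GeneralizedInverse

theorem lver_eventuallyEq_leftLim {E : Type*} [TopologicalSpace E] (f : ℝ≥0 → E) (a : ℝ≥0) :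
    lver f =ᶠ[𝓝[>] a] leftLim f := by
  filter_upwards [self_mem_nhdsWithin] with x (hx : a < x)
  exact if_neg (pos_of_gt hx).ne'

theorem stmt18_general {d : ℕ} (β : ℝ≥0 → (Fin d → ℝ)) (σ : ℝ≥0 → ℝ≥0)
    (hβ : Cadlag β) (hσ : Cadlag σ)
    (hub : ∀ M : ℝ≥0, ∃ s, M < σ s)
    (t : ℝ≥0) (ht : σ (ginv σ t) = t) :
    rver (lver β ∘ lver (ginv σ)) t = (β ∘ ginv σ) t := by
  have hℓ : Tendsto (lver (ginv σ)) (𝓝[>] t) (𝓝[>] (ginv σ t)) :=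
    (tendsto_leftLim_ginv_nhdsGT hub (hσ.1 _) ht).congr' (lver_eventuallyEq_leftLim _ t).symm
  have hβ' : Tendsto (lver β) (𝓝[>] (ginv σ t)) (𝓝 (β (ginv σ t))) :=
    (tendsto_leftLim_nhdsGT_of_tendsto (hβ.1 _)).congr' (lver_eventuallyEq_leftLim _ _).symm
  exact rightLim_eq_of_tendsto (hβ'.comp hℓ)

/-- let `(β, σ)` be rcll with `σ` non-decreasing and unbounded,
`ℓ = σ⁻¹`, lagging composition `X = (β⁻ ∘ ℓ⁻)⁺` and leading composition
`Y = β ∘ ℓ`. If `t` satisfies `σ(ℓ(t)) = t` and `t` is a right-limit point of the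
range of `σ`, then `X(t) = Y(t)`. -/
theorem stmt18 {d : ℕ} (β : ℝ≥0 → (Fin d → ℝ)) (σ : ℝ≥0 → ℝ≥0)
    (hβ : Cadlag β) (hσ : Cadlag σ) (hmono : Monotone σ)
    (hub : ∀ M : ℝ≥0, ∃ s, M < σ s)
    (t : ℝ≥0) (ht : σ (ginv σ t) = t)
    (hright : t ∈ closure (Set.range σ ∩ Set.Ioi t)) :
    rver (lver β ∘ lver (ginv σ)) t = (β ∘ ginv σ) t :=
  stmt18_general β σ hβ hσ hub t ht
end
end
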